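/- Let y ∈ ℝ, α_y ∈ (0,1), B > 0, and m ∈ ℤ₊. There exists a discrete distribution F_y supported on at most 2m+1 points in [−B,B] such that the mixture α_y δ_y + (1−α_y) F_y matches the first 2m moments of N(0,1) if and only if E_{X∼N(0,1)}[p(X)] ≥ α_y p(y) for every polynomial p of degree at most 2m that is nonnegative on [−B,B]. -/

import Mathlib

open MeasureTheory ProbabilityTheory Polynomial Finset

lemma aux_pow_le (n : ℕ) (t : ℝ) (ht : 0 ≤ t) : t ^ n ≤ n.factorial * Real.exp t := by
  have h := Real.sum_le_exp_of_nonneg ht (n+1)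
  have h2 : t ^ n / n.factorial ≤ Real.exp t :=
    le_trans (Finset.single_le_sum (f := fun i => t ^ i / i.factorial)
      (fun i _ => by positivity) (Finset.self_mem_range_succ n)) h
  have hpos : (0:ℝ) < n.factorial := by positivity
  rw [div_le_iff₀ hpos] at h2
  linarith [h2]

lemma aux_integrable_pow (n : ℕ) :
    Integrable (fun x : ℝ => x ^ n) (gaussianReal 0 1) := by
  rw [gaussianReal_of_var_ne_zero _ one_ne_zero]
  rw [integrable_withDensity_iff (measurable_gaussianPDF 0 1)
    (ae_of_all _ fun x => ENNReal.ofReal_lt_top)]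
  have h1 : ∀ x : ℝ, (gaussianPDF 0 1 x).toReal = gaussianPDFReal 0 1 x := fun x =>
    ENNReal.toReal_ofReal (gaussianPDFReal_nonneg _ _ _)
  set C : ℝ := 1 + 4 ^ n * n.factorial with hC
  refine Integrable.mono' (((integrable_exp_neg_mul_sq (by norm_num : (0:ℝ) < 4⁻¹)).const_mul C)) ?_ (ae_of_all _ fun x => ?_)
  · exact ((measurable_id.pow_const n).mul
      ((measurable_gaussianPDF 0 1).ennreal_toReal)).aestronglyMeasurable
  · rw [h1]
    have hpdf : gaussianPDFReal 0 1 x ≤ Real.exp (-x^2/2) := by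
      rw [gaussianPDFReal]
      have h3 : (Real.sqrt (2 * Real.pi * 1))⁻¹ ≤ 1 := by
        rw [inv_le_one_iff₀]; right
        rw [Real.one_le_sqrt]
        nlinarith [Real.pi_gt_three]
      have h4 : (0:ℝ) < Real.exp (-(x - 0)^2/(2*(1:NNReal))) := Real.exp_pos _
      calc (Real.sqrt (2 * Real.pi * 1))⁻¹ * Real.exp (-(x - 0)^2/(2*(1:NNReal)))
          ≤ 1 * Real.exp (-(x - 0)^2/(2*(1:NNReal))) := by
            apply mul_le_mul_of_nonneg_right h3 (le_of_lt h4)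
        _ = Real.exp (-x^2/2) := by norm_num
    have hpdf0 : 0 ≤ gaussianPDFReal 0 1 x := gaussianPDFReal_nonneg _ _ _
    have hxn : |x| ^ n ≤ 1 + (x^2) ^ n := by
      rcases le_or_gt (|x|) 1 with h | h
      · have h5 : |x| ^ n ≤ 1 := pow_le_one₀ (abs_nonneg x) h
        have h2n : (0:ℝ) ≤ (x^2) ^ n := by positivity
        linarith
      · have h5 : |x| ^ n ≤ |x| ^ (2*n) := pow_le_pow_right₀ h.le (by omega)
        have h6 : |x| ^ (2*n) = (x^2) ^ n := by
          rw [pow_mul, sq_abs]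
        nlinarith
    have hkey : (x^2)^n ≤ 4^n * n.factorial * Real.exp (4⁻¹ * x^2) := by
      have := aux_pow_le n (x^2/4) (by positivity)
      have h7 : (x^2)^n = 4^n * (x^2/4)^n := by
        rw [div_pow]
        field_simp
      rw [h7]
      have h8 : (x^2/4 : ℝ) = 4⁻¹ * x^2 := by ring
      rw [h8] at this
      have h9 : (0:ℝ) < 4^n := by positivity
      calc (4:ℝ)^n * (x^2/4)^n ≤ 4^n * (n.factorial * Real.exp (4⁻¹*x^2)) := by
            rw [h8]; exact mul_le_mul_of_nonneg_left this (le_of_lt h9)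
        _ = 4^n * n.factorial * Real.exp (4⁻¹ * x^2) := by ring
    have hnorm : ‖x ^ n * gaussianPDFReal 0 1 x‖ = |x| ^ n * gaussianPDFReal 0 1 x := by
      rw [Real.norm_eq_abs, abs_mul, abs_pow, abs_of_nonneg hpdf0]
    rw [hnorm]
    have hexp1 : Real.exp (-x^2/2) ≤ Real.exp (-4⁻¹ * x^2) := by
      apply Real.exp_le_exp.mpr; nlinarith [sq_nonneg x]
    have hexp2 : Real.exp (4⁻¹*x^2) * Real.exp (-x^2/2) = Real.exp (-4⁻¹*x^2) := by
      rw [← Real.exp_add]; ring_nf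
    have hfact : (0:ℝ) ≤ 4^n * n.factorial := by positivity
    calc |x| ^ n * gaussianPDFReal 0 1 x ≤ (1 + (x^2)^n) * Real.exp (-x^2/2) := by
          apply mul_le_mul hxn hpdf hpdf0
          positivity
      _ ≤ (1 + 4^n * n.factorial * Real.exp (4⁻¹*x^2)) * Real.exp (-x^2/2) := by
          apply mul_le_mul_of_nonneg_right _ (le_of_lt (Real.exp_pos _))
          linarith [hkey]
      _ = Real.exp (-x^2/2) + 4^n * n.factorial * (Real.exp (4⁻¹*x^2) * Real.exp (-x^2/2)) := by ring
      _ = Real.exp (-x^2/2) + 4^n * n.factorial * Real.exp (-4⁻¹*x^2) := by rw [hexp2]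
      _ ≤ Real.exp (-4⁻¹*x^2) + 4^n * n.factorial * Real.exp (-4⁻¹*x^2) := by linarith
      _ = C * Real.exp (-4⁻¹ * x^2) := by rw [hC]; ring

lemma aux_sum_pad {E : Type*} {β : Type*} [AddCommMonoid β] (t : Finset E) (D : ℕ)
    (hD : t.card ≤ D) (φ : E → β) :
    ∑ j : Fin D, (if h : (j : ℕ) < t.card then φ ((t.equivFin.symm ⟨(j : ℕ), h⟩ : t) : E) else 0)
      = ∑ e ∈ t, φ e := by
  rw [Fin.sum_univ_eq_sum_range
    (fun j => if h : j < t.card then φ ((t.equivFin.symm ⟨j, h⟩ : t) : E) else 0) D]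
  rw [← Finset.sum_subset (Finset.range_subset_range.mpr hD)
    (fun j _ hj => dif_neg (by simpa using hj))]
  rw [← Fin.sum_univ_eq_sum_range
    (fun j => if h : j < t.card then φ ((t.equivFin.symm ⟨j, h⟩ : t) : E) else 0) t.card]
  have h1 : ∀ j : Fin t.card,
      (if h : (j:ℕ) < t.card then φ ((t.equivFin.symm ⟨(j:ℕ), h⟩ : t) : E) else 0)
        = φ ((t.equivFin.symm j : t) : E) := fun j => by
    rw [dif_pos j.2]
  rw [Finset.sum_congr rfl fun j _ => h1 j]
  rw [Equiv.sum_comp t.equivFin.symm (fun e : t => φ (e : E))]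
  exact Finset.sum_coe_sort t φ

lemma aux_integral_poly (p : Polynomial ℝ) (N : ℕ) (hN : p.natDegree < N) :
    ∫ x, p.eval x ∂(gaussianReal 0 1)
      = ∑ i ∈ Finset.range N, p.coeff i * ∫ x, x ^ i ∂(gaussianReal 0 1) := by
  have hev : ∀ x : ℝ, p.eval x = ∑ i ∈ Finset.range N, p.coeff i * x ^ i := fun x =>
    eval_eq_sum_range' hN x
  calc ∫ x, p.eval x ∂(gaussianReal 0 1)
      = ∫ x, ∑ i ∈ Finset.range N, p.coeff i * x ^ i ∂(gaussianReal 0 1) := by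
        simp_rw [hev]
    _ = ∑ i ∈ Finset.range N, ∫ x, p.coeff i * x ^ i ∂(gaussianReal 0 1) := by
        refine integral_finset_sum _ fun i _ => ?_
        exact (aux_integrable_pow i).const_mul _
    _ = ∑ i ∈ Finset.range N, p.coeff i * ∫ x, x ^ i ∂(gaussianReal 0 1) := by
        simp_rw [integral_const_mul]

lemma aux_forward (y : ℝ) (αy : ℝ) (hα : αy ∈ Set.Ioo (0:ℝ) 1) (B : ℝ) (hB : 0 < B)
    (m : ℕ) (hm : 0 < m)
    (pts w : Fin (2*m+1) → ℝ)
    (hpts : ∀ j, pts j ∈ Set.Icc (-B) B) (hw : ∀ j, 0 ≤ w j) (hsum : (∑ j, w j) = 1)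
    (hmatch : ∀ i, 1 ≤ i → i ≤ 2*m →
          αy * y^i + (1 - αy) * ∑ j, w j * (pts j)^i = ∫ x, x^i ∂(gaussianReal 0 1))
    (p : Polynomial ℝ) (hdeg : p.natDegree ≤ 2*m)
    (hpos : ∀ t ∈ Set.Icc (-B) B, 0 ≤ p.eval t) :
    αy * p.eval y ≤ ∫ x, p.eval x ∂(gaussianReal 0 1) := by
  have hev : ∀ x : ℝ, p.eval x = ∑ i ∈ Finset.range (2*m+1), p.coeff i * x ^ i := fun x =>
    eval_eq_sum_range' (by omega) x
  have hM : ∀ i ∈ Finset.range (2*m+1), (∫ x, x^i ∂(gaussianReal 0 1))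
      = αy * y^i + (1 - αy) * ∑ j, w j * (pts j)^i := by
    intro i hi
    rcases Nat.eq_zero_or_pos i with h0 | h1
    · subst h0
      simp only [pow_zero, mul_one]
      rw [hsum]
      simp [integral_const]
    · exact (hmatch i h1 (by simp at hi; omega)).symm
  rw [aux_integral_poly p (2*m+1) (by omega)]
  rw [Finset.sum_congr rfl fun i hi => by rw [hM i hi]]
  have key : ∑ i ∈ Finset.range (2*m+1), p.coeff i * (αy * y^i + (1-αy) * ∑ j, w j * (pts j)^i)
      = αy * p.eval y + (1-αy) * ∑ j, w j * p.eval (pts j) := by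
    have expand : ∀ i ∈ Finset.range (2*m+1),
        p.coeff i * (αy * y^i + (1-αy) * ∑ j, w j * (pts j)^i)
        = αy * (p.coeff i * y^i) + (1-αy) * ∑ j, w j * (p.coeff i * (pts j)^i) := by
      intro i _
      rw [Finset.mul_sum, Finset.mul_sum]
      rw [mul_add]
      congr 1
      · ring
      · rw [Finset.mul_sum]
        exact Finset.sum_congr rfl fun j _ => by ring
    rw [Finset.sum_congr rfl expand, Finset.sum_add_distrib, ← Finset.mul_sum, ← Finset.mul_sum]
    rw [Finset.sum_comm]
    congr 1
    · rw [← hev]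
    · congr 1
      refine Finset.sum_congr rfl fun j _ => ?_
      rw [← Finset.mul_sum, ← hev]
  rw [key]
  have h2 : 0 ≤ ∑ j, w j * p.eval (pts j) :=
    Finset.sum_nonneg fun j _ => mul_nonneg (hw j) (hpos _ (hpts j))
  nlinarith [hα.2, h2]

lemma aux_backward (y : ℝ) (αy : ℝ) (hα : αy ∈ Set.Ioo (0:ℝ) 1) (B : ℝ) (hB : 0 < B)
    (m : ℕ) (hm : 0 < m)
    (hyp : ∀ p : Polynomial ℝ, p.natDegree ≤ 2*m →
        (∀ t ∈ Set.Icc (-B) B, 0 ≤ p.eval t) →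
        αy * p.eval y ≤ ∫ x, p.eval x ∂(gaussianReal 0 1)) :
    (∃ (pts w : Fin (2*m+1) → ℝ),
        (∀ j, pts j ∈ Set.Icc (-B) B) ∧ (∀ j, 0 ≤ w j) ∧ (∑ j, w j) = 1 ∧
        ∀ i, 1 ≤ i → i ≤ 2*m →
          αy * y^i + (1 - αy) * ∑ j, w j * (pts j)^i = ∫ x, x^i ∂(gaussianReal 0 1)) := by
  classical
  have hα1 : 0 < 1 - αy := by linarith [hα.2]
  set curve : ℝ → (Fin (2*m) → ℝ) := fun t i => t ^ ((i : ℕ) + 1) with hcurve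
  have hcurve_cont : Continuous curve := continuous_pi fun i => continuous_pow _
  set M : Set (Fin (2*m) → ℝ) := curve '' Set.Icc (-B) B with hMdef
  set Φ : ((Fin (2*m+1) → ℝ) × (Fin (2*m+1) → ℝ)) → (Fin (2*m) → ℝ) :=
    fun q => ∑ j, q.1 j • curve (q.2 j) with hΦdef
  have hΦcont : Continuous Φ := continuous_finset_sum _ fun j _ =>
    ((continuous_apply j).comp continuous_fst).smul
      (hcurve_cont.comp ((continuous_apply j).comp continuous_snd))
  set Dom : Set ((Fin (2*m+1) → ℝ) × (Fin (2*m+1) → ℝ)) :=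
    (stdSimplex ℝ (Fin (2*m+1))) ×ˢ (Set.pi Set.univ fun _ : Fin (2*m+1) => Set.Icc (-B) B)
    with hDomdef
  have hDomcomp : IsCompact Dom := (isCompact_stdSimplex (𝕜 := ℝ) (ι := Fin (2*m+1))).prod
    (isCompact_univ_pi fun _ => isCompact_Icc)
  set K : Set (Fin (2*m) → ℝ) := Φ '' Dom with hKdef
  have hKcomp : IsCompact K := hDomcomp.image hΦcont
  -- K ⊆ convexHull
  have hKsub : K ⊆ convexHull ℝ M := by
    rintro _ ⟨⟨w, s⟩, ⟨hwmem, hsmem⟩, rfl⟩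
    have h1 : Finset.univ.centerMass w (fun j => curve (s j)) ∈ convexHull ℝ M := by
      refine Finset.centerMass_mem_convexHull _ (fun i _ => hwmem.1 i) ?_ ?_
      · rw [hwmem.2]; exact zero_lt_one
      · exact fun i _ => ⟨s i, hsmem i (Set.mem_univ i), rfl⟩
    rwa [Finset.centerMass_eq_of_sum_1 _ _ hwmem.2] at h1
  -- convexHull ⊆ K  (Caratheodory)
  have hsubK : convexHull ℝ M ⊆ K := by
    intro x hx
    rw [convexHull_eq_union] at hx
    simp only [Set.mem_iUnion] at hx
    obtain ⟨t, ht, hai, hxt⟩ := hx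
    have hcard : t.card ≤ 2*m+1 := by
      have h1 := hai.card_le_finrank_succ
      rw [Fintype.card_coe] at h1
      have h2 : Module.finrank ℝ (vectorSpan ℝ (Set.range ((↑) : t → (Fin (2*m) → ℝ))))
          ≤ Module.finrank ℝ (Fin (2*m) → ℝ) := Submodule.finrank_le _
      have h3 : Module.finrank ℝ (Fin (2*m) → ℝ) = 2*m := Module.finrank_fin_fun ℝ
      omega
    rw [Finset.mem_convexHull] at hxt
    obtain ⟨w₀, hw₀, hsum₀, hcm⟩ := hxt
    rw [Finset.centerMass_eq_of_sum_1 _ _ hsum₀] at hcm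
    simp only [id] at hcm
    -- choice of preimages
    have hgex : ∀ e ∈ t, ∃ a, a ∈ Set.Icc (-B) B ∧ curve a = e := by
      intro e he
      obtain ⟨a, ha, hae⟩ := ht he
      exact ⟨a, ha, hae⟩
    set g : (Fin (2*m) → ℝ) → ℝ := fun e =>
      if h : ∃ a, a ∈ Set.Icc (-B) B ∧ curve a = e then h.choose else B with hgdef
    have hg1 : ∀ e ∈ t, g e ∈ Set.Icc (-B) B ∧ curve (g e) = e := by
      intro e he
      have h := hgex e he
      simp only [hgdef, dif_pos h]
      exact h.choose_spec
    set W : Fin (2*m+1) → ℝ := fun j =>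
      if h : (j : ℕ) < t.card then w₀ ((t.equivFin.symm ⟨(j : ℕ), h⟩ : t) : Fin (2*m) → ℝ)
      else 0 with hWdef
    set S : Fin (2*m+1) → ℝ := fun j =>
      if h : (j : ℕ) < t.card then g ((t.equivFin.symm ⟨(j : ℕ), h⟩ : t) : Fin (2*m) → ℝ)
      else B with hSdef
    refine ⟨⟨W, S⟩, ⟨⟨fun j => ?_, ?_⟩, fun j _ => ?_⟩, ?_⟩
    · -- 0 ≤ W j
      simp only [hWdef]
      split
      · next h => exact hw₀ _ (Finset.coe_mem _)
      · exact le_refl 0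
    · -- ∑ W = 1
      calc ∑ j, W j = ∑ e ∈ t, w₀ e := aux_sum_pad t (2*m+1) hcard w₀
        _ = 1 := hsum₀
    · -- S j ∈ Icc
      simp only [hSdef]
      split
      · next h => exact (hg1 _ (Finset.coe_mem _)).1
      · constructor <;> linarith
    · -- Φ (W, S) = x
      show ∑ j, W j • curve (S j) = x
      have hterm : ∀ j : Fin (2*m+1), W j • curve (S j)
          = (if h : (j : ℕ) < t.card then
              (fun e => w₀ e • e) ((t.equivFin.symm ⟨(j : ℕ), h⟩ : t) : Fin (2*m) → ℝ)
            else 0) := by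
        intro j
        by_cases h : (j : ℕ) < t.card
        · simp only [hWdef, hSdef, dif_pos h]
          rw [(hg1 _ (Finset.coe_mem _)).2]
        · simp only [hWdef, hSdef, dif_neg h, zero_smul]
      rw [Finset.sum_congr rfl fun j _ => hterm j]
      rw [aux_sum_pad t (2*m+1) hcard (fun e => w₀ e • e)]
      exact hcm
  have hKeq : K = convexHull ℝ M := le_antisymm hKsub hsubK
  -- the target vector
  set Mi : ℕ → ℝ := fun i => ∫ x, x ^ i ∂(gaussianReal 0 1) with hMidef
  set v : Fin (2*m) → ℝ := fun i => (Mi ((i : ℕ)+1) - αy * y ^ ((i : ℕ)+1)) / (1 - αy) with hvdef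
  -- v ∈ K
  have hvK : v ∈ K := by
    by_contra hv
    obtain ⟨f, u, hfv, hfb⟩ := geometric_hahn_banach_point_closed
      (hKeq ▸ convex_convexHull ℝ M) hKcomp.isClosed hv
    set c : Fin (2*m) → ℝ := fun i => f (fun j => if i = j then 1 else 0) with hcdef
    have hf_expand : ∀ z : Fin (2*m) → ℝ, f z = ∑ i, z i * c i := by
      intro z
      have := LinearMap.pi_apply_eq_sum_univ (f : (Fin (2*m) → ℝ) →ₗ[ℝ] ℝ) z
      simpa [hcdef, smul_eq_mul] using this
    set p : Polynomial ℝ :=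
      (∑ i : Fin (2*m), C (c i) * X ^ ((i : ℕ)+1)) - C u with hpdef
    have heval : ∀ s : ℝ, p.eval s = (∑ i : Fin (2*m), c i * s ^ ((i : ℕ)+1)) - u := by
      intro s
      simp [hpdef, eval_finset_sum]
    have hfcurve : ∀ s : ℝ, f (curve s) = ∑ i : Fin (2*m), c i * s ^ ((i : ℕ)+1) := by
      intro s
      rw [hf_expand]
      exact Finset.sum_congr rfl fun i _ => by rw [hcurve]; ring
    have hdeg : p.natDegree ≤ 2*m := by
      refine le_trans (natDegree_sub_le _ _) ?_
      rw [max_le_iff]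
      constructor
      · refine natDegree_sum_le_of_forall_le _ _ fun i _ => ?_
        refine le_trans (natDegree_C_mul_le _ _) ?_
        rw [natDegree_X_pow]
        omega
      · simp
    have hpos : ∀ s ∈ Set.Icc (-B) B, 0 ≤ p.eval s := by
      intro s hs
      have h1 : u < f (curve s) := hfb _ (hKeq ▸ subset_convexHull ℝ M ⟨s, hs, rfl⟩)
      rw [heval, ← hfcurve]
      linarith
    have hle := hyp p hdeg hpos
    have hintp : ∫ x, p.eval x ∂(gaussianReal 0 1)
        = (∑ i : Fin (2*m), c i * Mi ((i : ℕ)+1)) - u := by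
      simp_rw [heval]
      rw [integral_sub (integrable_finset_sum _ fun i _ =>
        (aux_integrable_pow _).const_mul _) (integrable_const u)]
      rw [integral_finset_sum _ fun i _ => (aux_integrable_pow _).const_mul _]
      simp_rw [integral_const_mul]
      simp [hMidef]
    have hkey : (∑ i : Fin (2*m), c i * Mi ((i : ℕ)+1))
        - αy * (∑ i : Fin (2*m), c i * y ^ ((i : ℕ)+1)) = (1 - αy) * f v := by
      rw [hf_expand v, Finset.mul_sum, Finset.mul_sum, ← Finset.sum_sub_distrib]
      refine Finset.sum_congr rfl fun i _ => ?_
      rw [hvdef]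
      field_simp
    rw [hintp, heval] at hle
    nlinarith [hfv, hα1]
  -- unpack v ∈ K
  obtain ⟨⟨W, S⟩, ⟨hWmem, hSmem⟩, hΦv⟩ := hvK
  refine ⟨S, W, fun j => hSmem j (Set.mem_univ j), hWmem.1, hWmem.2, ?_⟩
  intro i hi1 hi2
  have hidx : i - 1 < 2*m := by omega
  have hcoord := congrFun hΦv ⟨i - 1, hidx⟩
  have h1 : ∑ j, W j * (S j) ^ i = v ⟨i - 1, hidx⟩ := by
    rw [← hcoord]
    simp only [hΦdef]
    rw [Finset.sum_apply]
    refine Finset.sum_congr rfl fun j _ => ?_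
    simp only [Pi.smul_apply, smul_eq_mul, hcurve]
    congr 2
    omega
  rw [h1, hvdef]
  simp only
  have h2 : (i - 1) + 1 = i := by omega
  rw [h2]
  field_simp
  show _ = Mi i
  ring

theorem stmt12 (y : ℝ) (αy : ℝ) (hα : αy ∈ Set.Ioo (0:ℝ) 1) (B : ℝ) (hB : 0 < B)
    (m : ℕ) (hm : 0 < m) :
    (∃ (pts w : Fin (2*m+1) → ℝ),
        (∀ j, pts j ∈ Set.Icc (-B) B) ∧ (∀ j, 0 ≤ w j) ∧ (∑ j, w j) = 1 ∧
        ∀ i, 1 ≤ i → i ≤ 2*m →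
          αy * y^i + (1 - αy) * ∑ j, w j * (pts j)^i = ∫ x, x^i ∂(gaussianReal 0 1))
    ↔ (∀ p : Polynomial ℝ, p.natDegree ≤ 2*m →
        (∀ t ∈ Set.Icc (-B) B, 0 ≤ p.eval t) →
        αy * p.eval y ≤ ∫ x, p.eval x ∂(gaussianReal 0 1)) := by
  constructor
  · rintro ⟨pts, w, hpts, hw, hsum, hmatch⟩ p hdeg hpos
    exact aux_forward y αy hα B hB m hm pts w hpts hw hsum hmatch p hdeg hpos
  · intro hyp
    exact aux_backward y αy hα B hB m hm hyp
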